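/- arXiv:1408.5923 — 4 statements merged into one kernel-verified Lean document; each statement's English description precedes it below -/
import Mathlib

section
/- Over a field K with 1+1 ≠ 0, a regular quadratic form on a finite-dimensional vector space that represents zero nontrivially represents every element of K. -/
/-! Let `a ≠ 0` be isotropic and pick `b` with `polar q b a ≠ 0` by regularity. Along the line
`t ↦ b + t • a` the form is affine, `q (b + t • a) = q b + t * polar q b a`, with nonzero slope,
so it takes every value; and `polar q (b + t • a) a = polar q b a ≠ 0` keeps these vectors
nonzero. -/

namespace QuadraticMap

variable {R M N : Type*} [CommRing R] [AddCommGroup M] [AddCommGroup N] [Module R M]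
  [Module R N] (Q : QuadraticMap R M N) {a : M}

theorem map_add_smul_of_map_eq_zero (ha : Q a = 0) (b : M) (t : R) :
    Q (b + t • a) = Q b + t • polar Q b a := by
  rw [QuadraticMap.map_add Q, QuadraticMap.map_smul, ha, smul_zero, add_zero, polar_smul_right]

theorem polar_add_smul_left_of_map_eq_zero (ha : Q a = 0) (b : M) (t : R) :
    polar Q (b + t • a) a = polar Q b a := by
  rw [polar_add_left, polar_smul_left, polar_self, ha, smul_zero, smul_zero, add_zero]

end QuadraticMap

theorem regular_quadraticForm_represents_all_of_represents_zero_general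
    {K V : Type*} [Field K] [AddCommGroup V] [Module K V]
    (q : QuadraticForm K V)
    (hreg : ∀ y : V, y ≠ 0 → ∃ x : V, QuadraticMap.polar (⇑q) x y ≠ 0)
    (a : V) (ha : a ≠ 0) (ha0 : q a = 0) :
    ∀ α : K, ∃ x : V, x ≠ 0 ∧ q x = α := by
  intro α
  obtain ⟨b, hb⟩ := hreg a ha
  set t := (α - q b) / QuadraticMap.polar q b a
  refine ⟨b + t • a, ?_, ?_⟩
  · intro hzero
    apply hb
    rw [← q.polar_add_smul_left_of_map_eq_zero ha0 b t, hzero, QuadraticMap.polar_zero_left]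
  · rw [q.map_add_smul_of_map_eq_zero ha0, smul_eq_mul, div_mul_cancel₀ _ hb]
    ring

/-- Over a field `K` with `1 + 1 ≠ 0`, a regular quadratic form on a finite-dimensional
vector space that represents zero nontrivially represents every element of `K`. -/
theorem regular_quadraticForm_represents_all_of_represents_zero
    {K V : Type*} [Field K] [AddCommGroup V] [Module K V] [FiniteDimensional K V]
    (h2 : (2 : K) ≠ 0) (q : QuadraticForm K V)
    (hreg : ∀ y : V, y ≠ 0 → ∃ x : V, QuadraticMap.polar (⇑q) x y ≠ 0)
    (a : V) (ha : a ≠ 0) (ha0 : q a = 0) :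
    ∀ α : K, ∃ x : V, x ≠ 0 ∧ q x = α :=
  regular_quadraticForm_represents_all_of_represents_zero_general q hreg a ha ha0
end

section
/- Let N be a finitely generated free module over a principal ideal domain O (with 1+1 ≠ 0) equipped with a quadratic form, and let M⊥ denote its radical. Then N splits as an orthogonal direct sum N = M⊥ ⊥ L for some submodule L, and if 0 < rank(M⊥) < rank(N) there is a basis e₁,...,eₙ of N with e₁,...,e_k a basis of M⊥ and e_{k+1},...,eₙ a basis of L. -/
/-!
The radical `K` of `q` is the kernel of the polar map `N → N*`, so `N ⧸ K` embeds into the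
torsion-free module `N*`. Over a PID a finitely generated torsion-free module is free, hence
projective, so `N → N ⧸ K` splits and `K` has a complement `L`; `K` is orthogonal to everything,
in particular to `L`. Concatenating bases of the free modules `K` and `L` gives the adapted basis.
-/

open Module Submodule

section

variable {R M P : Type*} [Ring R] [AddCommGroup M] [Module R M] [AddCommGroup P] [Module R P]

theorem LinearMap.isCompl_ker_range_of_comp_eq_id {f : M →ₗ[R] P} {g : P →ₗ[R] M}
    (hfg : f ∘ₗ g = LinearMap.id) : IsCompl (LinearMap.ker f) (LinearMap.range g) := by
  have hf : LinearMap.range f = ⊤ :=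
    LinearMap.range_eq_top.mpr (Function.RightInverse.surjective (LinearMap.congr_fun hfg))
  have hg : LinearMap.ker g = ⊥ :=
    LinearMap.ker_eq_bot.mpr (Function.LeftInverse.injective (LinearMap.congr_fun hfg))
  have hidem : IsIdempotentElem (g ∘ₗ f) := by
    rw [IsIdempotentElem, Module.End.mul_eq_comp, LinearMap.comp_assoc, ← LinearMap.comp_assoc f,
      hfg, LinearMap.id_comp]
  simpa [LinearMap.range_comp_of_range_eq_top g hf, LinearMap.ker_comp_of_ker_eq_bot f hg]
    using (IsIdempotentElem.isCompl hidem).symm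

theorem Submodule.exists_isCompl_of_projective_quotient (p : Submodule R M)
    [Projective R (M ⧸ p)] : ∃ q : Submodule R M, IsCompl p q := by
  obtain ⟨g, hg⟩ := p.mkQ.exists_rightInverse_of_surjective p.range_mkQ
  exact ⟨LinearMap.range g, by simpa using LinearMap.isCompl_ker_range_of_comp_eq_id hg⟩

theorem LinearMap.isTorsionFree_quotient_ker [IsTorsionFree R P] (f : M →ₗ[R] P) :
    IsTorsionFree R (M ⧸ LinearMap.ker f) :=
  Function.Injective.moduleIsTorsionFree
    ((LinearMap.range f).subtype ∘ₗ f.quotKerEquivRange.toLinearMap)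
    (Subtype.val_injective.comp f.quotKerEquivRange.injective) (map_smul _)

theorem Submodule.span_range_coe_basis {ι : Type*} {p : Submodule R M} (b : Basis ι R p) :
    span R (Set.range fun i ↦ (b i : M)) = p := by
  rw [Set.range_comp' Subtype.val b, ← p.coe_subtype, span_image, b.span_eq, map_subtype_top]

theorem Submodule.exists_basis_fin_span_eq_of_isCompl {p q : Submodule R M} (h : IsCompl p q)
    {k m : ℕ} (bp : Basis (Fin k) R p) (bq : Basis (Fin m) R q) :
    ∃ e : Basis (Fin (k + m)) R M,
      span R (e '' {i | (i : ℕ) < k}) = p ∧ span R (e '' {i | k ≤ (i : ℕ)}) = q := by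
  let e := ((bp.prod bq).map (prodEquivOfIsCompl p q h)).reindex finSumFinEquiv
  have he_left : e ∘ Fin.castAdd m = fun i ↦ (bp i : M) := by
    ext i; simp [e, coe_prodEquivOfIsCompl']
  have he_right : e ∘ Fin.natAdd k = fun i ↦ (bq i : M) := by
    ext i; simp [e, coe_prodEquivOfIsCompl']
  refine ⟨e, ?_, ?_⟩
  · rw [← Fin.range_castLE (Nat.le_add_right k m), ← Set.range_comp]
    change span R (Set.range (e ∘ Fin.castAdd m)) = p
    rw [he_left, span_range_coe_basis]
  · rw [← Fin.range_natAdd, ← Set.range_comp, he_right, span_range_coe_basis]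

end

theorem radical_orthogonal_splitting_general
    {O N : Type*} [CommRing O] [IsDomain O] [IsPrincipalIdealRing O]
    [AddCommGroup N] [Module O N] [Module.Free O N] [Module.Finite O N]
    (q : QuadraticForm O N) :
    ∃ L : Submodule O N,
      IsCompl (LinearMap.ker (QuadraticMap.polarBilin q)) L ∧
      (∀ x ∈ LinearMap.ker (QuadraticMap.polarBilin q), ∀ y ∈ L,
        QuadraticMap.polar (⇑q) x y = 0) ∧
      ((0 < Module.finrank O (LinearMap.ker (QuadraticMap.polarBilin q)) ∧
          Module.finrank O (LinearMap.ker (QuadraticMap.polarBilin q)) <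
            Module.finrank O N) →
        ∃ (n k : ℕ) (e : Module.Basis (Fin n) O N), k ≤ n ∧
          Submodule.span O (⇑e '' {i : Fin n | (i : ℕ) < k}) =
            LinearMap.ker (QuadraticMap.polarBilin q) ∧
          Submodule.span O (⇑e '' {i : Fin n | k ≤ (i : ℕ)}) = L) := by
  have := (QuadraticMap.polarBilin q).isTorsionFree_quotient_ker
  obtain ⟨L, hL⟩ :=
    (LinearMap.ker (QuadraticMap.polarBilin q)).exists_isCompl_of_projective_quotient
  refine ⟨L, hL, fun x hx y _ ↦ LinearMap.congr_fun (LinearMap.mem_ker.mp hx) y, fun _ ↦ ?_⟩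
  obtain ⟨e, he⟩ := exists_basis_fin_span_eq_of_isCompl hL (finBasis O _) (finBasis O L)
  exact ⟨_, _, e, Nat.le_add_right _ _, he⟩

/-- A finitely generated free quadratic module `N` over a PID `O` (with `1+1 ≠ 0`) is the
orthogonal splitting of its radical `M⊥` and another submodule `L`; and if
`0 < rank M⊥ < rank N` there is a basis `e₁,...,eₙ` of `N` such that `e₁,...,e_k` is a
basis of `M⊥` and `e_{k+1},...,eₙ` is a basis of `L`. -/
theorem radical_orthogonal_splitting
    {O N : Type*} [CommRing O] [IsDomain O] [IsPrincipalIdealRing O] (h2 : (2 : O) ≠ 0)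
    [AddCommGroup N] [Module O N] [Module.Free O N] [Module.Finite O N]
    (q : QuadraticForm O N) :
    ∃ L : Submodule O N,
      IsCompl (LinearMap.ker (QuadraticMap.polarBilin q)) L ∧
      (∀ x ∈ LinearMap.ker (QuadraticMap.polarBilin q), ∀ y ∈ L,
        QuadraticMap.polar (⇑q) x y = 0) ∧
      ((0 < Module.finrank O (LinearMap.ker (QuadraticMap.polarBilin q)) ∧
          Module.finrank O (LinearMap.ker (QuadraticMap.polarBilin q)) <
            Module.finrank O N) →
        ∃ (n k : ℕ) (e : Module.Basis (Fin n) O N), k ≤ n ∧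
          Submodule.span O (⇑e '' {i : Fin n | (i : ℕ) < k}) =
            LinearMap.ker (QuadraticMap.polarBilin q) ∧
          Submodule.span O (⇑e '' {i : Fin n | k ≤ (i : ℕ)}) = L) :=
  radical_orthogonal_splitting_general q
end

section
/- For a module M with finite basis over a principal ideal domain O, an element b = β₁e₁ + ... + βₙeₙ of M is a member of some basis of M if and only if the ideal (β₁,...,βₙ) equals O. -/
/-!
A vector `v` belongs to a basis exactly when some linear functional `f` has `f v = 1`: the
coordinate functional gives one direction; conversely `M = O v ⊕ ker f`, and over a PID the
submodule `ker f` is free, so `v` followed by a basis of `ker f` is a basis of `M`. Since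
`f (∑ βⱼ eⱼ) = ∑ βⱼ f(eⱼ)` and the values `f(eⱼ)` can be prescribed arbitrarily, such an `f`
exists iff `1 ∈ (β₁, …, βₙ)`.
-/

open Module Submodule

namespace Module.Basis

variable {R M : Type*} [AddCommGroup M]

theorem exists_linearMap_apply_sum_smul_eq_one_iff {ι : Type*} [Fintype ι] [CommRing R]
    [Module R M] (b : Basis ι R M) (β : ι → R) :
    (∃ f : M →ₗ[R] R, f (∑ j, β j • b j) = 1) ↔ Ideal.span (Set.range β) = ⊤ := by
  rw [Ideal.eq_top_iff_one, Ideal.mem_span_range_iff_exists_fun]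
  constructor
  · rintro ⟨f, hf⟩
    refine ⟨fun j => f (b j), ?_⟩
    simpa [mul_comm] using hf
  · rintro ⟨γ, hγ⟩
    refine ⟨b.constr ℕ γ, ?_⟩
    simpa only [map_sum, map_smul, constr_basis, smul_eq_mul, mul_comm] using hγ

variable [Ring R] [Module R M]

noncomputable def consKer {m : ℕ} (f : M →ₗ[R] R) (v : M) (hv : f v = 1)
    (bK : Basis (Fin m) R (LinearMap.ker f)) : Basis (Fin (m + 1)) R M :=
  mkFinCons v bK
    (fun c x hx hcx => by simpa [hv, LinearMap.mem_ker.mp hx] using congrArg f hcx)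
    (fun z => ⟨-f z, by simp [hv]⟩)

@[simp]
theorem consKer_zero {m : ℕ} (f : M →ₗ[R] R) (v : M) (hv : f v = 1)
    (bK : Basis (Fin m) R (LinearMap.ker f)) : consKer f v hv bK 0 = v := by
  simp [consKer]

end Module.Basis

open Module.Basis in
theorem exists_basis_apply_eq_iff_exists_linearMap_apply_eq_one {O M ι : Type*} [CommRing O]
    [IsDomain O] [IsPrincipalIdealRing O] [AddCommGroup M] [Module O M] [Finite ι]
    (b : Basis ι O M) (v : M) :
    (∃ (c : Basis ι O M) (i : ι), c i = v) ↔ ∃ f : M →ₗ[O] O, f v = 1 := by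
  constructor
  · rintro ⟨c, i, rfl⟩
    exact ⟨c.coord i, by simp⟩
  · rintro ⟨f, hf⟩
    obtain ⟨m, bK⟩ := basisOfPid b (LinearMap.ker f)
    let c := consKer f v hf bK
    refine ⟨c.reindex (c.indexEquiv b), c.indexEquiv b 0, ?_⟩
    simp [c]

/-- For a module `M` with finite basis over a PID `O`, the vector `β₁e₁ + ... + βₙeₙ` is a
member of some basis of `M` iff the ideal `(β₁,...,βₙ)` equals `O`. -/
theorem mem_basis_iff_span_coords_eq_top
    {O M : Type*} [CommRing O] [IsDomain O] [IsPrincipalIdealRing O]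
    [AddCommGroup M] [Module O M] {n : ℕ} (b : Module.Basis (Fin n) O M) (β : Fin n → O) :
    (∃ (c : Module.Basis (Fin n) O M) (i : Fin n), c i = ∑ j, β j • b j) ↔
      Ideal.span (Set.range β) = ⊤ := by
  rw [exists_basis_apply_eq_iff_exists_linearMap_apply_eq_one b,
    b.exists_linearMap_apply_sum_smul_eq_one_iff]
end

section
/- Over any field K with 1+1 ≠ 0, any two nonzero symmetric 2×2 matrices with the same determinant are geometrically equivalent: if P, Q ∈ Sym₂(K) are nonzero with det P = det Q, then there exists A ∈ GL₂(K) with P = AᵗQA / det(A). -/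
open Matrix

/-
Twisted congruence `P = (det A)⁻¹ • AᵀQA` is an equivalence relation, so it suffices to bring
every nonzero symmetric `P = !![a, b; b, c]` to the normal form `!![1, 0; 0, det P]`. Pick `v`
with `q(v) = vᵀPv ≠ 0` (one exists since `2 ≠ 0`) and let `w = J P v` be `Pv` rotated by a
quarter turn. Then `vᵀPw = 0`, `det [v | w] = q(v)` and `q(w) = det P · q(v)`, so
`[v | w]ᵀ P [v | w] = q(v) • !![1, 0; 0, det P]`.
-/

theorem exists_quadratic_ne_zero {K : Type*} [Field K] {a b c : K} (h2 : (2 : K) ≠ 0)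
    (habc : ¬(a = 0 ∧ b = 0 ∧ c = 0)) :
    ∃ x y : K, a * x ^ 2 + 2 * b * x * y + c * y ^ 2 ≠ 0 := by
  by_cases ha : a = 0
  · by_cases hc : c = 0
    · exact ⟨1, 1, by simpa [ha, hc, h2] using habc⟩
    · exact ⟨0, 1, by simpa using hc⟩
  · exact ⟨1, 0, by simpa using ha⟩

namespace Matrix

variable {n K : Type*} [Fintype n] [DecidableEq n] [Field K]

/-- The geometric equivalence of symmetric matrices. -/
def TwistedCongr (P Q : Matrix n n K) : Prop :=
  ∃ A : Matrix n n K, IsUnit A.det ∧ P = A.det⁻¹ • (Aᵀ * Q * A)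

namespace TwistedCongr

theorem trans {P Q R : Matrix n n K} (hPQ : TwistedCongr P Q) (hQR : TwistedCongr Q R) :
    TwistedCongr P R := by
  obtain ⟨A, hA, rfl⟩ := hPQ
  obtain ⟨B, hB, rfl⟩ := hQR
  refine ⟨B * A, by simpa [det_mul] using hB.mul hA, ?_⟩
  rw [Matrix.mul_smul, Matrix.smul_mul, smul_smul, det_mul, mul_inv, mul_comm, transpose_mul]
  simp only [Matrix.mul_assoc]

theorem symm {P Q : Matrix n n K} (h : TwistedCongr P Q) : TwistedCongr Q P := by
  obtain ⟨A, hA, rfl⟩ := h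
  have hdet : A⁻¹.det = A.det⁻¹ := by rw [det_nonsing_inv, Ring.inverse_eq_inv']
  refine ⟨A⁻¹, by simpa [hdet] using hA.inv, ?_⟩
  rw [hdet, inv_inv, Matrix.mul_smul, Matrix.smul_mul, smul_smul, mul_inv_cancel₀ hA.ne_zero,
    one_smul, transpose_nonsing_inv, Matrix.mul_assoc, Matrix.mul_assoc, mul_nonsing_inv _ hA,
    Matrix.mul_one, ← Matrix.mul_assoc, nonsing_inv_mul _ (by simpa using hA), Matrix.one_mul]

end TwistedCongr

theorem twistedCongr_normalForm_of_quadratic_ne_zero {a b c x y : K}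
    (hq : a * x ^ 2 + 2 * b * x * y + c * y ^ 2 ≠ 0) :
    TwistedCongr !![1, 0; 0, a * c - b ^ 2] !![a, b; b, c] := by
  set B : Matrix (Fin 2) (Fin 2) K := !![x, -(b * x + c * y); y, a * x + b * y]
  have hdet : B.det = a * x ^ 2 + 2 * b * x * y + c * y ^ 2 := by
    rw [det_fin_two_of]; ring
  have hcongr : Bᵀ * !![a, b; b, c] * B = B.det • !![1, 0; 0, a * c - b ^ 2] := by
    rw [hdet]
    ext i j
    fin_cases i <;> fin_cases j <;> simp [B, Matrix.mul_apply, Fin.sum_univ_two] <;> ring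
  refine ⟨B, hdet ▸ hq.isUnit, ?_⟩
  rw [hcongr, smul_smul, inv_mul_cancel₀ (hdet ▸ hq), one_smul]

theorem twistedCongr_normalForm_of_isSymm {P : Matrix (Fin 2) (Fin 2) K} (h2 : (2 : K) ≠ 0)
    (hP : P.IsSymm) (hP0 : P ≠ 0) : TwistedCongr !![1, 0; 0, P.det] P := by
  have hP' : P = !![P 0 0, P 0 1; P 0 1, P 1 1] := by
    ext i j
    fin_cases i <;> fin_cases j <;> simp [hP.apply 0 1]
  have hdet : P.det = P 0 0 * P 1 1 - P 0 1 ^ 2 := by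
    rw [det_fin_two, hP.apply 0 1, sq]
  obtain ⟨x, y, hq⟩ := exists_quadratic_ne_zero (a := P 0 0) (b := P 0 1) (c := P 1 1) h2
    fun ⟨ha, hb, hc⟩ => hP0 (by rw [hP', ha, hb, hc]; exact etaExpand_eq 0)
  rw [hdet]
  conv_rhs => rw [hP']
  exact twistedCongr_normalForm_of_quadratic_ne_zero hq

end Matrix

/-- Over any field `K` with `1+1 ≠ 0`, all nonzero symmetric `2×2` matrices of the same
determinant are geometrically equivalent: `P = AᵗQA / det A` for some `A ∈ GL₂(K)`. -/
theorem geometrically_equivalent_of_det_eq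
    {K : Type*} [Field K] (h2 : (2 : K) ≠ 0)
    (P Q : Matrix (Fin 2) (Fin 2) K) (hP : P.IsSymm) (hQ : Q.IsSymm)
    (hP0 : P ≠ 0) (hQ0 : Q ≠ 0) (hdet : P.det = Q.det) :
    ∃ A : Matrix (Fin 2) (Fin 2) K, IsUnit A.det ∧
      P = (A.det)⁻¹ • (Aᵀ * Q * A) :=
  (twistedCongr_normalForm_of_isSymm h2 hP hP0).symm.trans
    (hdet ▸ twistedCongr_normalForm_of_isSymm h2 hQ hQ0)
end
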